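/- Let A be a commutative semi-automaton with sink state s_f such that for each strongly connected component S_i (i = 1,…,m−1) there is a word u_i with δ(S_i, u_i) = {s_f}. Then the concatenation u = u_1 u_2 ⋯ u_{m−1} is a synchronizing word for A. -/
import Mathlib


/-- The action of a complete deterministic semi-automaton, extended to words. -/
def run {Q A : Type*} (δ : Q → A → Q) (q : Q) (w : List A) : Q := w.foldl δ q

/-- State `t` is reachable from `s`. -/
def Reach {Q A : Type*} (δ : Q → A → Q) (s t : Q) : Prop := ∃ u : List A, run δ s u = t

/-- `S` is a strongly connected component: a maximal set of pairwise connected states. -/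
def IsSCC {Q A : Type*} (δ : Q → A → Q) (S : Set Q) : Prop :=
  S.Nonempty ∧ (∀ s ∈ S, ∀ t ∈ S, Reach δ s t) ∧
    ∀ q : Q, (∀ s ∈ S, Reach δ s q ∧ Reach δ q s) → q ∈ S

lemma run_append {Q A : Type*} (δ : Q → A → Q) (q : Q) (v w : List A) :
    run δ q (v ++ w) = run δ (run δ q v) w := by
  simp [run, List.foldl_append]

lemma run_letter_comm {Q A : Type*} (δ : Q → A → Q)
    (hcomm : ∀ (q : Q) (a b : A), δ (δ q a) b = δ (δ q b) a)
    (q : Q) (a : A) (w : List A) : δ (run δ q w) a = run δ (δ q a) w := by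
  induction w generalizing q with
  | nil => rfl
  | cons b t ih => simp [run] at *; rw [ih, hcomm]

lemma run_comm {Q A : Type*} (δ : Q → A → Q)
    (hcomm : ∀ (q : Q) (a b : A), δ (δ q a) b = δ (δ q b) a)
    (q : Q) (v w : List A) : run δ (run δ q v) w = run δ (run δ q w) v := by
  induction v generalizing q with
  | nil => rfl
  | cons a t ih =>
      show run δ (run δ (δ q a) t) w = run δ (δ (run δ q w) a) t
      rw [ih, run_letter_comm δ hcomm]

lemma run_sink {Q A : Type*} (δ : Q → A → Q) (sf : Q)
    (hsink : ∀ x : A, δ sf x = sf) (w : List A) : run δ sf w = sf := by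
  induction w with
  | nil => rfl
  | cons a t ih => show run δ (δ sf a) t = sf; rw [hsink]; exact ih

lemma flatten_sync {Q A : Type*} (δ : Q → A → Q)
    (hcomm : ∀ (q : Q) (a b : A), δ (δ q a) b = δ (δ q b) a)
    (sf : Q) (hsink : ∀ x : A, δ sf x = sf)
    (L : List (List A)) (l : List A) (hl : l ∈ L) (q : Q)
    (hq : run δ q l = sf) : run δ q L.flatten = sf := by
  induction L generalizing q with
  | nil => simp at hl
  | cons a t ih =>
      rw [List.flatten_cons, run_append]
      rcases List.mem_cons.mp hl with rfl | hl'
      · rw [hq, run_sink δ sf hsink]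
      · refine ih hl' _ ?_
        rw [run_comm δ hcomm, hq, run_sink δ sf hsink]

theorem concatenation_synchronizes {Q A : Type*} [Fintype Q] (δ : Q → A → Q)
    (hcomm : ∀ (q : Q) (a b : A), δ (δ q a) b = δ (δ q b) a)
    (m : ℕ) (hm : 0 < m) (S : Fin m → Set Q) (sf : Q)
    (hscc : ∀ T : Set Q, IsSCC δ T ↔ ∃ i : Fin m, T = S i)
    (hlast : S ⟨m - 1, Nat.sub_lt hm Nat.one_pos⟩ = {sf})
    (hsink : ∀ x : A, δ sf x = sf)
    (u : Fin m → List A)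
    (hu : ∀ i : Fin m, (i : ℕ) < m - 1 → (fun q => run δ q (u i)) '' S i = {sf}) :
    ∀ q : Q, run δ q (((List.ofFn u).take (m - 1)).flatten) = sf := by
  intro q
  -- the SCC containing q
  set T : Set Q := {t | Reach δ q t ∧ Reach δ t q} with hT
  have hqT : q ∈ T := ⟨⟨[], rfl⟩, ⟨[], rfl⟩⟩
  have hTscc : IsSCC δ T := by
    refine ⟨⟨q, hqT⟩, ?_, ?_⟩
    · rintro s ⟨_, ⟨v, hv⟩⟩ t ⟨⟨w, hw⟩, _⟩
      exact ⟨v ++ w, by rw [run_append, hv, hw]⟩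
    · intro p hp
      exact hp q hqT
  obtain ⟨i, hTi⟩ := (hscc T).mp hTscc
  have hqSi : q ∈ S i := hTi ▸ hqT
  by_cases hi : (i : ℕ) < m - 1
  · -- u i maps q to sf, and u i is a member of the taken list
    have hrun : run δ q (u i) = sf := by
      have := hu i hi
      have : (fun q => run δ q (u i)) q ∈ ({sf} : Set Q) := this ▸ ⟨q, hqSi, rfl⟩
      simpa using this
    have hmem : u i ∈ (List.ofFn u).take (m - 1) := by
      have h1 : (i : ℕ) < ((List.ofFn u).take (m - 1)).length := by
        have := i.isLt
        simp [List.length_take, List.length_ofFn]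
        omega
      have : ((List.ofFn u).take (m - 1))[(i : ℕ)] = u i := by
        rw [List.getElem_take, List.getElem_ofFn]
      exact this ▸ List.getElem_mem h1
    exact flatten_sync δ hcomm sf hsink _ _ hmem q hrun
  · -- i = m - 1, so q = sf
    have hieq : i = ⟨m - 1, Nat.sub_lt hm Nat.one_pos⟩ := by
      apply Fin.ext
      show (i : ℕ) = m - 1
      have : (i : ℕ) < m := i.isLt
      omega
    have hq : q = sf := by
      have := hieq ▸ hqSi
      rw [hlast] at this
      simpa using this
    rw [hq, run_sink δ sf hsink]
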